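/- If travel times satisfy the triangle inequality, then any feasible solution of the set covering relaxation of LCCP (a collection of length-feasible cycles such that every node belongs to at least one cycle) can be transformed into a feasible set partitioning solution with the same number of cycles: for each node covered more than once, remove it from all but one of the cycles, and all resulting cycles remain length-feasible. -/

import Mathlib

variable {V : Type} [DecidableEq V] [Fintype V]

/-- Total travel time of the cycle visiting the nodes of `L` in order (cyclically). -/
def cycTime (te : V → V → ℝ) (L : List V) : ℝ :=
  (List.zipWith te L (L.rotate 1)).sum

/-- Minimum critical time over the nodes of a cycle. -/
def cycQ (qn : V → ℝ) : List V → ℝ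
  | [] => 0
  | a :: l => (l.map qn).foldr min (qn a)

/-- A length-feasible cycle: a nonempty list of distinct nodes whose total travel time
is at most the minimum critical time of its nodes. -/
def LengthFeasible (te : V → V → ℝ) (qn : V → ℝ) (L : List V) : Prop :=
  L ≠ [] ∧ L.Nodup ∧ cycTime te L ≤ cycQ qn L

/-!
Give every node `i` one cycle `f i` containing it and keep `i` only in that cycle.
The kept nodes of each cycle form a sublist of it, so the new cycles are disjoint and cover `V`.
By the triangle inequality, shortcutting a cycle to a sublist does not increase its travel time,
and the minimum critical time over fewer nodes can only grow, so the nonempty ones stay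
length-feasible.
-/

open List

theorem List.exists_eq_append_cons_of_cons_sublist {α : Type*} {a : α} {l L : List α}
    (h : a :: l <+ L) : ∃ p s, L = p ++ a :: s ∧ l <+ s := by
  obtain ⟨r₁, r₂, rfl, ha, hl⟩ := List.cons_sublist_iff.mp h
  obtain ⟨p, q, rfl⟩ := List.append_of_mem ha
  exact ⟨p, q ++ r₂, by simp, hl.trans (List.sublist_append_right q r₂)⟩

section TravelTime

variable {α : Type} (te : α → α → ℝ)

def pathTime : α → List α → α → ℝ
  | x, [], y => te x y
  | x, a :: l, y => te x a + pathTime a l y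

theorem pathTime_append (p : List α) (x a : α) (s : List α) (y : α) :
    pathTime te x (p ++ a :: s) y = pathTime te x p a + pathTime te a s y := by
  induction p generalizing x with
  | nil => rfl
  | cons b p ih => simp only [List.cons_append, pathTime, ih]; ring

theorem cycTime_cons (a : α) (l : List α) : cycTime te (a :: l) = pathTime te a l a := by
  suffices h : ∀ (l : List α) (a y : α),
      (List.zipWith te (a :: l) (l ++ [y])).sum = pathTime te a l y by
    rw [cycTime, List.rotate_cons_succ, List.rotate_zero, h]
  intro l
  induction l with
  | nil => simp [pathTime]
  | cons b l ih => intro a y; simp [pathTime, ih b y]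

theorem cycTime_append_cons (p : List α) (a : α) (s : List α) :
    cycTime te (p ++ a :: s) = pathTime te a (s ++ p) a := by
  cases p with
  | nil => simp [cycTime_cons]
  | cons b p =>
    rw [List.cons_append, cycTime_cons, pathTime_append, pathTime_append]
    exact add_comm _ _

variable {te}

theorem pathTime_le_add_pathTime (htri : ∀ i j k, te i j ≤ te i k + te k j)
    (l : List α) (x a y : α) : pathTime te x l y ≤ te x a + pathTime te a l y := by
  cases l with
  | nil => exact htri x y a
  | cons b l => simp only [pathTime]; linarith [htri x b a]

theorem pathTime_le_of_sublist (htri : ∀ i j k, te i j ≤ te i k + te k j) {l' l : List α}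
    (hs : l' <+ l) (x y : α) :
    pathTime te x l' y ≤ pathTime te x l y := by
  induction hs generalizing x with
  | slnil => exact le_rfl
  | cons a _ ih => exact (ih x).trans (pathTime_le_add_pathTime htri _ x a y)
  | cons_cons a _ ih => simp only [pathTime]; linarith [ih a]

theorem cycTime_le_of_sublist (htri : ∀ i j k, te i j ≤ te i k + te k j) {L' L : List α}
    (hs : L' <+ L) (hne : L' ≠ []) :
    cycTime te L' ≤ cycTime te L := by
  obtain ⟨a, l', rfl⟩ := List.exists_cons_of_ne_nil hne
  obtain ⟨p, s, rfl, hl'⟩ := List.exists_eq_append_cons_of_cons_sublist hs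
  rw [cycTime_cons, cycTime_append_cons]
  exact pathTime_le_of_sublist htri (hl'.trans (List.sublist_append_left s p)) a a

end TravelTime

section CriticalTime

variable {α : Type} (qn : α → ℝ)

theorem le_cycQ_iff {L : List α} (hL : L ≠ []) (c : ℝ) :
    c ≤ cycQ qn L ↔ ∀ x ∈ L, c ≤ qn x := by
  obtain ⟨a, l, rfl⟩ := List.exists_cons_of_ne_nil hL
  simp only [cycQ, List.forall_mem_cons]
  clear hL
  induction l with
  | nil => simp
  | cons b l ih =>
    rw [List.map_cons, List.foldr_cons, le_min_iff, ih, List.forall_mem_cons, and_left_comm]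

theorem cycQ_le_cycQ_of_subset {L' L : List α} (hne : L' ≠ []) (hs : L' ⊆ L) :
    cycQ qn L ≤ cycQ qn L' :=
  (le_cycQ_iff qn hne _).mpr fun x hx =>
    (le_cycQ_iff qn (List.ne_nil_of_mem (hs (List.head_mem hne))) _).mp le_rfl x (hs hx)

end CriticalTime

theorem LengthFeasible.of_sublist {α : Type} {te : α → α → ℝ} {qn : α → ℝ}
    (htri : ∀ i j k, te i j ≤ te i k + te k j) {L' L : List α}
    (hL : LengthFeasible te qn L) (hs : L' <+ L) (hne : L' ≠ []) :
    LengthFeasible te qn L' :=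
  ⟨hne, hL.2.1.sublist hs, (cycTime_le_of_sublist htri hs hne).trans <|
    hL.2.2.trans (cycQ_le_cycQ_of_subset qn hne hs.subset)⟩

theorem covering_to_partitioning_general
    (te : V → V → ℝ) (qn : V → ℝ)
    (htri : ∀ i j k, te i j ≤ te i k + te k j)
    (n : ℕ) (C : Fin n → List V)
    (hfeas : ∀ k, LengthFeasible te qn (C k))
    (hcover : ∀ i : V, ∃ k, i ∈ C k) :
    ∃ D : Fin n → List V,
      (∀ k, (D k).toFinset ⊆ (C k).toFinset) ∧
      (∀ k l, k ≠ l → Disjoint (D k).toFinset (D l).toFinset) ∧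
      (∀ i : V, ∃ k, i ∈ D k) ∧
      (∀ k, D k = [] ∨ LengthFeasible te qn (D k)) := by
  choose f hf using hcover
  refine ⟨fun k => (C k).filter (f · = k), fun k => ?_, fun k l hkl => ?_, fun i => ?_,
    fun k => ?_⟩
  · exact Multiset.toFinset_subset.mpr List.filter_sublist.subset
  · rw [List.disjoint_toFinset_iff_disjoint]
    intro x hx hx'
    simp only [List.mem_filter, decide_eq_true_eq] at hx hx'
    exact hkl (hx.2.symm.trans hx'.2)
  · exact ⟨f i, List.mem_filter.mpr ⟨hf i, by simp⟩⟩
  · rw [or_iff_not_imp_left]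
    exact (hfeas k).of_sublist htri List.filter_sublist

/-- under the triangle inequality, any set covering solution (a finite
collection of length-feasible cycles such that every node lies in at least one cycle)
can be transformed into a set partitioning solution with the same number of cycles:
each cycle is replaced by a subcycle (keeping, for every multiply covered node, only
one occurrence across all cycles) so that the resulting cycles are node-disjoint, cover
all of `V`, and each is empty or length-feasible. -/
theorem covering_to_partitioning
    (te : V → V → ℝ) (qn : V → ℝ)
    (hte : ∀ i j, 0 ≤ te i j)
    (htri : ∀ i j k, te i j ≤ te i k + te k j)
    (hqn : ∀ i, 0 < qn i)
    (n : ℕ) (C : Fin n → List V)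
    (hfeas : ∀ k, LengthFeasible te qn (C k))
    (hcover : ∀ i : V, ∃ k, i ∈ C k) :
    ∃ D : Fin n → List V,
      (∀ k, (D k).toFinset ⊆ (C k).toFinset) ∧
      (∀ k l, k ≠ l → Disjoint (D k).toFinset (D l).toFinset) ∧
      (∀ i : V, ∃ k, i ∈ D k) ∧
      (∀ k, D k = [] ∨ LengthFeasible te qn (D k)) :=
  covering_to_partitioning_general te qn htri n C hfeas hcover
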